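/- arXiv:1501.03659 — 3 statements merged into one kernel-verified Lean document; each statement's English description precedes it below -/
import Mathlib

section
/- Let Z and Z̃ be real random variables with E[(Z − Z̃)²] = s² < ∞, and suppose Z is Gaussian with variance σ² > 0. Then for any threshold t, P({Z ≥ t} Δ {Z̃ ≥ t}) ≤ 2√s / √(2πσ²) + s, where the symmetric difference of events means P(Z ≥ t, Z̃ < t) + P(Z < t, Z̃ ≥ t). -/
open MeasureTheory ProbabilityTheory Real

/-- Let `Z` and `Z̃` be real random variables with `E[(Z − Z̃)²] = s² < ∞`, and suppose `Z`
is Gaussian with variance `σ² > 0`. Then for any threshold `t`,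
`P(Z ≥ t, Z̃ < t) + P(Z < t, Z̃ ≥ t) ≤ 2√s / √(2πσ²) + s`. -/
theorem misclassification_prob_le
    {Ω : Type*} [MeasurableSpace Ω] (P : Measure Ω) [IsProbabilityMeasure P]
    (Z Ztil : Ω → ℝ) (m : ℝ) (v : NNReal) (hv : 0 < v)
    (hZ : Measure.map Z P = gaussianReal m v)
    (s : ℝ) (hs : 0 ≤ s)
    (hint : Integrable (fun ω => (Z ω - Ztil ω) ^ 2) P)
    (hs2 : ∫ ω, (Z ω - Ztil ω) ^ 2 ∂P = s ^ 2)
    (t : ℝ) :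
    (P {ω | Z ω ≥ t ∧ Ztil ω < t}).toReal + (P {ω | Z ω < t ∧ Ztil ω ≥ t}).toReal
      ≤ 2 * Real.sqrt s / Real.sqrt (2 * π * v) + s := by
  have hZm : AEMeasurable Z P := by
    by_contra h
    rw [Measure.map_of_not_aemeasurable h] at hZ
    have h1 : (gaussianReal m v) Set.univ = 1 := measure_univ
    rw [← hZ] at h1
    simp at h1
  set A := {ω | Z ω ≥ t ∧ Ztil ω < t} with hA
  set B := {ω | Z ω < t ∧ Ztil ω ≥ t} with hB
  rcases eq_or_lt_of_le hs with hs0 | hspos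
  · -- s = 0 : Z = Ztil a.e., both sets are null
    have hzero : ∀ᵐ ω ∂P, (Z ω - Ztil ω) ^ 2 = 0 := by
      have hnn : 0 ≤ᵐ[P] fun ω => (Z ω - Ztil ω) ^ 2 :=
        Filter.Eventually.of_forall fun ω => sq_nonneg _
      have := (integral_eq_zero_iff_of_nonneg_ae hnn hint).mp (by rw [hs2, ← hs0]; ring)
      filter_upwards [this] with ω hω using hω
    have heq : ∀ᵐ ω ∂P, Z ω = Ztil ω := by
      filter_upwards [hzero] with ω hω
      have : Z ω - Ztil ω = 0 := by
        have := sq_eq_zero_iff.mp hω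
        linarith [this]
      linarith
    have hnull : P {ω | Z ω ≠ Ztil ω} = 0 := by
      simpa [ae_iff] using heq
    have hA0 : P A = 0 := by
      refine measure_mono_null ?_ hnull
      intro ω hω
      exact fun he => absurd he (by simp only [hA, Set.mem_setOf_eq] at hω; intro; linarith [hω.1, hω.2])
    have hB0 : P B = 0 := by
      refine measure_mono_null ?_ hnull
      intro ω hω
      exact fun he => absurd he (by simp only [hB, Set.mem_setOf_eq] at hω; intro; linarith [hω.1, hω.2])
    rw [hA0, hB0]
    simp only [ENNReal.toReal_zero, add_zero]
    positivity
  · -- s > 0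
    set w := Real.sqrt s with hw
    have hwpos : 0 < w := Real.sqrt_pos.mpr hspos
    have hw2 : w ^ 2 = s := Real.sq_sqrt hs
    set C := {ω | |Z ω - t| ≤ w} with hC
    set D := {ω | s ≤ (Z ω - Ztil ω) ^ 2} with hD
    have hincl : A ∪ B ⊆ C ∪ D := by
      rintro ω (⟨h1, h2⟩ | ⟨h1, h2⟩) <;>
      · by_cases hc : |Z ω - t| ≤ w
        · exact Or.inl hc
        · right
          rw [abs_le, not_and_or, not_le, not_le] at hc
          show s ≤ (Z ω - Ztil ω) ^ 2
          rcases hc with hc | hc <;> nlinarith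
    -- additivity
    have hE : NullMeasurableSet {ω | t ≤ Z ω} P := by
      have := hZm.nullMeasurableSet_preimage (measurableSet_Ici (a := t))
      simpa [Set.preimage] using this
    have hsum : P A + P B = P (A ∪ B) := by
      have h1 : (A ∪ B) ∩ {ω | t ≤ Z ω} = A := by
        ext ω
        simp only [Set.mem_inter_iff, Set.mem_union, hA, hB, Set.mem_setOf_eq]
        constructor
        · rintro ⟨h | h, hz⟩
          · exact h
          · exact absurd hz (not_le.mpr h.1)
        · exact fun h => ⟨Or.inl h, h.1⟩
      have h2 : (A ∪ B) \ {ω | t ≤ Z ω} = B := by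
        ext ω
        simp only [Set.mem_diff, Set.mem_union, hA, hB, Set.mem_setOf_eq, not_le]
        constructor
        · rintro ⟨h | h, hz⟩
          · exact absurd h.1 (not_le.mpr hz)
          · exact h
        · exact fun h => ⟨Or.inr h, h.1⟩
      have h3 := measure_inter_add_diff₀ (A ∪ B) hE
      rw [h1, h2] at h3
      exact h3
    have hsplit : P A + P B ≤ P C + P D :=
      hsum ▸ (measure_mono hincl).trans (measure_union_le C D)
    -- Gaussian bound on P C
    have hCval : P C ≤ ENNReal.ofReal (2 * w / Real.sqrt (2 * π * v)) := by
      have hCpre : C = Z ⁻¹' Set.Icc (t - w) (t + w) := by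
        ext ω
        simp only [hC, Set.mem_setOf_eq, Set.mem_preimage, Set.mem_Icc, abs_le]
        constructor <;> (rintro ⟨h1, h2⟩; constructor <;> linarith)
      have hmap : P C = (gaussianReal m v) (Set.Icc (t - w) (t + w)) := by
        rw [hCpre, ← hZ, Measure.map_apply_of_aemeasurable hZm measurableSet_Icc]
      rw [hmap, gaussianReal_apply m hv.ne' _]
      have hle : ∫⁻ x in Set.Icc (t - w) (t + w), gaussianPDF m v x
          ≤ ∫⁻ _ in Set.Icc (t - w) (t + w), ENNReal.ofReal ((Real.sqrt (2 * π * v))⁻¹) := by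
        refine setLIntegral_mono (by fun_prop) fun x _ => ?_
        refine ENNReal.ofReal_le_ofReal ?_
        rw [gaussianPDFReal]
        have hexp : rexp (-(x - m) ^ 2 / (2 * v)) ≤ 1 := by
          rw [Real.exp_le_one_iff]
          apply div_nonpos_of_nonpos_of_nonneg
          · simp [sq_nonneg]
          · positivity
        have h0 : (0:ℝ) ≤ (Real.sqrt (2 * π * v))⁻¹ := by positivity
        nlinarith [Real.exp_pos (-(x - m) ^ 2 / (2 * v))]
      refine hle.trans ?_
      rw [setLIntegral_const, Real.volume_Icc]
      have : t + w - (t - w) = 2 * w := by ring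
      rw [this, ← ENNReal.ofReal_mul (by positivity)]
      exact ENNReal.ofReal_le_ofReal (le_of_eq (by rw [div_eq_mul_inv]; ring))
    -- Chebyshev bound on P D
    have hDval : P D ≤ ENNReal.ofReal s := by
      set g : Ω → ENNReal := fun ω => ENNReal.ofReal ((Z ω - Ztil ω) ^ 2) with hg
      have hgm : AEMeasurable g P := hint.aestronglyMeasurable.aemeasurable.ennreal_ofReal
      have hsub : D ⊆ {ω | ENNReal.ofReal s ≤ g ω} := fun ω hω =>
        ENNReal.ofReal_le_ofReal hω
      have hcheb := meas_ge_le_lintegral_div hgm (ε := ENNReal.ofReal s)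
        (by simp [ENNReal.ofReal_eq_zero, not_le, hspos]) ENNReal.ofReal_ne_top
      have hlint : ∫⁻ ω, g ω ∂P = ENNReal.ofReal (s ^ 2) := by
        rw [hg, ← ofReal_integral_eq_lintegral_ofReal hint
          (Filter.Eventually.of_forall fun ω => sq_nonneg _), hs2]
      refine (measure_mono hsub).trans (hcheb.trans ?_)
      rw [hlint, ← ENNReal.ofReal_div_of_pos hspos]
      apply ENNReal.ofReal_le_ofReal
      rw [sq, mul_div_assoc, div_self hspos.ne', mul_one]
    -- combine
    have htot : P A + P B ≤ ENNReal.ofReal (2 * w / Real.sqrt (2 * π * v)) + ENNReal.ofReal s :=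
      hsplit.trans (add_le_add hCval hDval)
    have hAfin : P A ≠ ⊤ := measure_ne_top _ _
    have hBfin : P B ≠ ⊤ := measure_ne_top _ _
    have := ENNReal.toReal_mono (by simp [ENNReal.add_ne_top]) htot
    rw [ENNReal.toReal_add hAfin hBfin,
      ENNReal.toReal_add ENNReal.ofReal_ne_top ENNReal.ofReal_ne_top,
      ENNReal.toReal_ofReal (by positivity), ENNReal.toReal_ofReal hs] at this
    exact this
end

section
/- Let Γ be a random closed set in D with coverage function p_Γ(x) = P(x ∈ Γ), μ a finite Borel measure on D, and α ∈ (0,1] with Q_α = {x ∈ D : p_Γ(x) ≥ α}. If μ(Q_α) = E[μ(Γ)] and α ≥ 1/2, then Q_α minimizes M ↦ E[μ(Γ Δ M)] among all measurable sets M ⊆ D with μ(M) = E[μ(Γ)]. -/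
open MeasureTheory

/-- Let `Γ` be a random closed set in `D` with coverage function `p_Γ(x) = P(x ∈ Γ)`,
`μ` a finite Borel measure on `D`, and `α ∈ (0,1]` with `Q_α = {x : p_Γ(x) ≥ α}`.
If `μ(Q_α) = E[μ(Γ)]` and `α ≥ 1/2`, then `Q_α` minimizes `M ↦ E[μ(Γ Δ M)]` among all
measurable sets `M ⊆ D` with `μ(M) = E[μ(Γ)]`. -/
theorem vorobev_expectation_minimizes_expected_distance
    {Ω D : Type*} [MeasurableSpace Ω] [MeasurableSpace D]
    (P : Measure Ω) [IsProbabilityMeasure P]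
    (μ : Measure D) [IsFiniteMeasure μ]
    (Γ : Ω → Set D)
    (hΓ : MeasurableSet {p : Ω × D | p.2 ∈ Γ p.1})
    (α : ℝ) (hα : α ∈ Set.Ioc (0 : ℝ) 1) (hα2 : 1 / 2 ≤ α)
    (Qα : Set D) (hQα : Qα = {x | α ≤ (P {ω | x ∈ Γ ω}).toReal})
    (hvol : μ Qα = ∫⁻ ω, μ (Γ ω) ∂P) :
    ∀ M : Set D, MeasurableSet M → μ M = ∫⁻ ω, μ (Γ ω) ∂P →
      ∫⁻ ω, μ (symmDiff (Γ ω) Qα) ∂P ≤ ∫⁻ ω, μ (symmDiff (Γ ω) M) ∂P := by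
  intro M hM hMvol
  set T : Set (Ω × D) := {p : Ω × D | p.2 ∈ Γ p.1} with hT
  set f : D → ENNReal := fun x => P {ω | x ∈ Γ ω} with hf_def
  have hf : Measurable f := by
    exact measurable_measure_prodMk_right (μ := P) hΓ
  have hf1 : ∀ x, f x ≤ 1 := fun x => prob_le_one
  have hfne : ∀ x, f x ≠ ⊤ := fun x => ((hf1 x).trans_lt ENNReal.one_lt_top).ne
  have hQmeas : MeasurableSet Qα := by
    rw [hQα]
    exact measurableSet_le measurable_const hf.ennreal_toReal
  set a : ENNReal := ENNReal.ofReal α with ha_def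
  have hfQ : ∀ x ∈ Qα, a ≤ f x := by
    intro x hx
    rw [hQα] at hx
    calc a ≤ ENNReal.ofReal (f x).toReal := ENNReal.ofReal_le_ofReal hx
      _ = f x := ENNReal.ofReal_toReal (hfne x)
  have hfQc : ∀ x ∉ Qα, f x ≤ a := by
    intro x hx
    rw [hQα] at hx
    simp only [Set.mem_setOf_eq, not_le] at hx
    calc f x = ENNReal.ofReal (f x).toReal := (ENNReal.ofReal_toReal (hfne x)).symm
      _ ≤ a := ENNReal.ofReal_le_ofReal hx.le
  -- slices of T are measurable
  have hslice : ∀ x : D, MeasurableSet {ω | x ∈ Γ ω} := fun x =>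
    measurable_prodMk_right (m := inferInstance) hΓ
  have hsliceΩ : ∀ ω : Ω, MeasurableSet (Γ ω) := fun ω =>
    measurable_prodMk_left (m := inferInstance) hΓ
  -- key identity
  have key : ∀ S : Set D, MeasurableSet S →
      ∫⁻ ω, μ (symmDiff (Γ ω) S) ∂P
        = (μ S - ∫⁻ x in S, f x ∂μ) + ((∫⁻ x, f x ∂μ) - ∫⁻ x in S, f x ∂μ) := by
    intro S hS
    have hA : MeasurableSet (T \ (Set.univ ×ˢ S)) := hΓ.diff (MeasurableSet.univ.prod hS)
    have hB : MeasurableSet ((Set.univ ×ˢ S) \ T) := (MeasurableSet.univ.prod hS).diff hΓ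
    have hAslice : ∀ ω, Prod.mk ω ⁻¹' (T \ (Set.univ ×ˢ S)) = Γ ω \ S := by
      intro ω; ext x; simp [hT]
    have hBslice : ∀ ω, Prod.mk ω ⁻¹' ((Set.univ ×ˢ S) \ T) = S \ Γ ω := by
      intro ω; ext x; simp [hT]
    have h1 : ∀ ω, μ (symmDiff (Γ ω) S)
        = μ (Prod.mk ω ⁻¹' (T \ (Set.univ ×ˢ S))) + μ (Prod.mk ω ⁻¹' ((Set.univ ×ˢ S) \ T)) := by
      intro ω
      rw [hAslice, hBslice, Set.symmDiff_def,
        measure_union disjoint_sdiff_sdiff (hS.diff (hsliceΩ ω))]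
    have h2 : ∫⁻ ω, μ (symmDiff (Γ ω) S) ∂P
        = (P.prod μ) (T \ (Set.univ ×ˢ S)) + (P.prod μ) ((Set.univ ×ˢ S) \ T) := by
      rw [Measure.prod_apply hA, Measure.prod_apply hB, ← lintegral_add_left
        (measurable_measure_prodMk_left hA)]
      exact lintegral_congr h1
    -- compute the two product measures as integrals in x
    have h3 : (P.prod μ) (T \ (Set.univ ×ˢ S)) = ∫⁻ x in Sᶜ, f x ∂μ := by
      rw [Measure.prod_apply_symm hA, ← lintegral_indicator hS.compl]
      refine lintegral_congr fun x => ?_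
      by_cases hx : x ∈ S
      · have : (fun ω => (ω, x)) ⁻¹' (T \ (Set.univ ×ˢ S)) = ∅ := by
          ext ω; simp [hT, hx]
        simp [this, Set.indicator_of_notMem (by simp [hx] : x ∉ Sᶜ)]
      · have : (fun ω => (ω, x)) ⁻¹' (T \ (Set.univ ×ˢ S)) = {ω | x ∈ Γ ω} := by
          ext ω; simp [hT, hx]
        simp [this, Set.indicator_of_mem (by simp [hx] : x ∈ Sᶜ), hf_def]
    have h4 : (P.prod μ) ((Set.univ ×ˢ S) \ T) = ∫⁻ x in S, (1 - f x) ∂μ := by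
      rw [Measure.prod_apply_symm hB, ← lintegral_indicator hS]
      refine lintegral_congr fun x => ?_
      by_cases hx : x ∈ S
      · have : (fun ω => (ω, x)) ⁻¹' ((Set.univ ×ˢ S) \ T) = {ω | x ∈ Γ ω}ᶜ := by
          ext ω; simp [hT, hx]
        rw [this, Set.indicator_of_mem hx, measure_compl (hslice x) (measure_ne_top P _)]
        simp [hf_def]
      · have : (fun ω => (ω, x)) ⁻¹' ((Set.univ ×ˢ S) \ T) = ∅ := by
          ext ω; simp [hT, hx]
        simp [this, Set.indicator_of_notMem hx]
    have hSfin : ∫⁻ x in S, f x ∂μ ≠ ⊤ := by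
      refine ((setLIntegral_mono' hS fun x _ => hf1 x).trans_lt ?_).ne
      simp [measure_lt_top]
    have h5 : ∫⁻ x in S, (1 - f x) ∂μ = μ S - ∫⁻ x in S, f x ∂μ := by
      refine ENNReal.eq_sub_of_add_eq hSfin ?_
      rw [← lintegral_add_right _ hf]
      have : ∀ x, (1 - f x) + f x = 1 := fun x => tsub_add_cancel_of_le (hf1 x)
      simp_rw [this]
      simp
    have h6 : ∫⁻ x in Sᶜ, f x ∂μ = (∫⁻ x, f x ∂μ) - ∫⁻ x in S, f x ∂μ := by
      refine ENNReal.eq_sub_of_add_eq hSfin ?_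
      rw [add_comm, lintegral_add_compl f hS]
    rw [h2, h3, h4, h5, h6]
    exact add_comm _ _
  -- key inequality : ∫_M f ≤ ∫_Qα f
  have hdiff_eq : μ (M \ Qα) = μ (Qα \ M) := by
    have h1 : μ (M ∩ Qα) + μ (M \ Qα) = μ M := measure_inter_add_diff M hQmeas
    have h2 : μ (Qα ∩ M) + μ (Qα \ M) = μ Qα := measure_inter_add_diff Qα hM
    rw [Set.inter_comm] at h2
    have : μ (M ∩ Qα) + μ (M \ Qα) = μ (M ∩ Qα) + μ (Qα \ M) := by
      rw [h1, h2, hvol, hMvol]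
    exact (ENNReal.add_right_inj (measure_ne_top μ _)).mp this
  have hkey : ∫⁻ x in M, f x ∂μ ≤ ∫⁻ x in Qα, f x ∂μ := by
    rw [← lintegral_inter_add_diff f M hQmeas, ← lintegral_inter_add_diff f Qα hM,
      Set.inter_comm Qα M]
    refine add_le_add le_rfl ?_
    calc ∫⁻ x in M \ Qα, f x ∂μ
        ≤ ∫⁻ x in M \ Qα, a ∂μ := setLIntegral_mono' (hM.diff hQmeas) fun x hx => hfQc x hx.2
      _ = a * μ (M \ Qα) := by rw [setLIntegral_const]
      _ = a * μ (Qα \ M) := by rw [hdiff_eq]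
      _ = ∫⁻ x in Qα \ M, a ∂μ := by rw [setLIntegral_const]
      _ ≤ ∫⁻ x in Qα \ M, f x ∂μ := setLIntegral_mono' (hQmeas.diff hM) fun x hx => hfQ x hx.1
  rw [key Qα hQmeas, key M hM, hvol, ← hMvol]
  exact add_le_add (tsub_le_tsub le_rfl hkey) (tsub_le_tsub le_rfl hkey)
end

section
/- Let Z be a real random variable and Z̃ₘ a nonincreasing-error sequence of predictors in the sense that sₘ² = E[(Z − Z̃ₘ)²] is nonincreasing in m. If Z is Gaussian with Var(Z) > 0 and sₘ² does not converge to 0, then there exists ε' > 0 such that P(Z ≥ t, Z̃ₘ < t) + P(Z < t, Z̃ₘ ≥ t) ≥ ε' for all m, whenever Z̃ₘ = E[Z | Fₘ] for an increasing filtration (Fₘ) making (Z, Z̃ₘ) jointly Gaussian, E[Z] ≠ t, and the ratios |t − E[Z]|/√Var(Z) lie in [1/M, M] for some M > 1. -/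
/-!
As `Z̃ₘ = E[Z | Fₘ]`, it has the mean of `Z`, and the law of total variance gives
`Var Z̃ₘ = Var Z - sₘ²`. The errors `sₘ²` decrease to a positive limit `L`, so each Gaussian `Z̃ₘ`
has variance at most `Var Z - L`. If `E Z < t`, the tail `P(N(E Z, u) ≥ t)` is strictly increasing
in the variance `u`, hence `P(Z ≥ t, Z̃ₘ < t) ≥ P(Z ≥ t) - P(Z̃ₘ ≥ t)` stays above the gap between
the tails at variances `Var Z` and `Var Z - L`. If `t < E Z`, the same holds for the lower tails.
-/

open MeasureTheory ProbabilityTheory Filter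
open Set
open scoped NNReal Topology

lemma Antitone.exists_pos_le_of_not_tendsto_zero {ι : Type*} [Preorder ι] [Nonempty ι]
    {s : ι → ℝ} (hs : Antitone s) (h0 : ∀ i, 0 ≤ s i) (hs0 : ¬ Tendsto s atTop (𝓝 0)) :
    ∃ L > 0, ∀ i, L ≤ s i := by
  have hbdd : BddBelow (range s) := ⟨0, forall_mem_range.2 h0⟩
  refine ⟨⨅ i, s i, (le_ciInf h0).lt_of_ne fun h => hs0 ?_, fun i => ciInf_le hbdd i⟩
  exact h ▸ tendsto_atTop_ciInf hs hbdd

lemma hasLaw_of_map_eq {Ω 𝓧 : Type*} {mΩ : MeasurableSpace Ω} {m𝓧 : MeasurableSpace 𝓧}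
    {P : Measure Ω} {X : Ω → 𝓧} {ν : Measure 𝓧} [NeZero ν] (h : P.map X = ν) :
    HasLaw X ν P :=
  ⟨aemeasurable_of_map_neZero (h ▸ inferInstance), h⟩

lemma integral_sq_sub_condExp_add_variance_condExp {Ω : Type*} {m m₀ : MeasurableSpace Ω}
    (hm : m ≤ m₀) {μ : Measure Ω} [IsProbabilityMeasure μ] {X : Ω → ℝ} (hX : MemLp X 2 μ) :
    ∫ ω, (X ω - μ[X | m] ω) ^ 2 ∂μ + Var[μ[X | m]; μ] = Var[X; μ] := by
  rw [← integral_condVar_add_variance_condExp hm hX, condVar, integral_condExp hm]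
  rfl

lemma gaussianReal_params_of_ae_eq_condExp {Ω : Type*} {m m₀ : MeasurableSpace Ω}
    (hm : m ≤ m₀) {P : Measure Ω} [IsProbabilityMeasure P] {Z Y : Ω → ℝ} {μ μ' : ℝ}
    {v v' : ℝ≥0} (hZ : P.map Z = gaussianReal μ v) (hY : Y =ᵐ[P] P[Z | m])
    (hYlaw : P.map Y = gaussianReal μ' v') :
    μ' = μ ∧ (v' : ℝ) + ∫ ω, (Z ω - Y ω) ^ 2 ∂P = v := by
  have hZ' := hasLaw_of_map_eq hZ
  have hY' := hasLaw_of_map_eq hYlaw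
  have hZ2 : MemLp Z 2 P := by
    have h := memLp_id_gaussianReal' (μ := μ) (v := v) 2 (by norm_num)
    rw [← hZ, memLp_map_measure_iff (hZ ▸ aestronglyMeasurable_id) hZ'.aemeasurable] at h
    exact h
  have hsq : ∫ ω, (Z ω - Y ω) ^ 2 ∂P = ∫ ω, (Z ω - P[Z | m] ω) ^ 2 ∂P :=
    integral_congr_ae (by filter_upwards [hY] with ω hω; rw [hω])
  refine ⟨?_, ?_⟩
  · rw [← integral_id_gaussianReal (μ := μ') (v := v'), ← hY'.integral_eq,
      integral_congr_ae hY, integral_condExp hm, hZ'.integral_eq, integral_id_gaussianReal]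
  · rw [← variance_id_gaussianReal (μ := μ') (v := v'), ← hY'.variance_eq, variance_congr hY,
      hsq, add_comm, integral_sq_sub_condExp_add_variance_condExp hm hZ2, hZ'.variance_eq,
      variance_id_gaussianReal]

lemma gaussianReal_eq_map_gaussianReal_zero_one (μ : ℝ) (v : ℝ≥0) :
    gaussianReal μ v = (gaussianReal 0 1).map (fun x => √v * x + μ) := by
  have hv : NNReal.mk (√(v : ℝ) ^ 2) (sq_nonneg _) * 1 = v := by
    rw [mul_one]; exact NNReal.eq (Real.sq_sqrt v.2)
  rw [show (fun x => √v * x + μ) = (· + μ) ∘ (√v * ·) from rfl,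
    ← Measure.map_map (by fun_prop) (by fun_prop), gaussianReal_map_const_mul, hv,
    gaussianReal_map_add_const, mul_zero, zero_add]

instance isOpenPosMeasure_gaussianReal (μ : ℝ) (v : ℝ≥0) [NeZero v] :
    (gaussianReal μ v).IsOpenPosMeasure :=
  (gaussianReal_absolutelyContinuous' μ (NeZero.ne v)).isOpenPosMeasure

lemma strictMono_gaussianReal_of_isUpperSet {μ t : ℝ} {T : Set ℝ} (hμt : μ < t)
    (hT : MeasurableSet T) (hTup : IsUpperSet T) (hTt : T ⊆ Ici t) (htT : Ioi t ⊆ T) :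
    StrictMono fun u : ℝ≥0 => (gaussianReal μ u).real T := by
  intro u w huw
  have hsqrt : √(u : ℝ) < √(w : ℝ) := Real.sqrt_lt_sqrt u.2 huw
  -- Pulled back to `N(0, 1)` along `x ↦ √u x + μ`, the set `T` grows with `u`, and strictly
  -- by the nonempty open set `U`.
  let A : ℝ≥0 → Set ℝ := fun u => (fun x => √u * x + μ) ⁻¹' T
  have hAmono : A u ⊆ A w := by
    intro x hx
    have hx0 : 0 < x := by
      have : 0 < √(u : ℝ) * x := by linarith [mem_Ici.1 (hTt hx)]
      exact pos_of_mul_pos_right this (Real.sqrt_nonneg _)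
    exact hTup (by simp only; gcongr) hx
  obtain ⟨c, huc, hcw⟩ := exists_between hsqrt
  have hc : 0 < c := (Real.sqrt_nonneg _).trans_lt huc
  let U : Set ℝ := {x | √u * x + μ < t} ∩ {x | t < √w * x + μ}
  have hU : IsOpen U := (isOpen_lt (by fun_prop) continuous_const).inter
    (isOpen_lt continuous_const (by fun_prop))
  have hUne : U.Nonempty := by
    refine ⟨(t - μ) / c, ?_, ?_⟩
    · have h : √(u : ℝ) * ((t - μ) / c) < c * ((t - μ) / c) := by gcongr
      rw [mul_div_cancel₀ _ hc.ne'] at h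
      show √(u : ℝ) * ((t - μ) / c) + μ < t
      linarith
    · have h : c * ((t - μ) / c) < √(w : ℝ) * ((t - μ) / c) := by gcongr
      rw [mul_div_cancel₀ _ hc.ne'] at h
      show t < √(w : ℝ) * ((t - μ) / c) + μ
      linarith
  have hUA : U ⊆ A w \ A u := fun x hx =>
    ⟨htT hx.2, fun hxu => (mem_Ici.1 (hTt hxu)).not_gt hx.1⟩
  simp only [gaussianReal_eq_map_gaussianReal_zero_one μ]
  rw [map_measureReal_apply (by fun_prop) hT, map_measureReal_apply (by fun_prop) hT]
  have hdiff := measureReal_sdiff hAmono (hT.preimage (by fun_prop)) (μ := gaussianReal 0 1)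
  have hUle := measureReal_mono hUA (μ := gaussianReal 0 1)
  have hUpos : 0 < (gaussianReal 0 1).real U :=
    ENNReal.toReal_pos (hU.measure_pos _ hUne).ne' (measure_ne_top _ _)
  linarith

lemma strictMono_gaussianReal_Ici {μ t : ℝ} (hμt : μ < t) :
    StrictMono fun u : ℝ≥0 => (gaussianReal μ u).real (Ici t) :=
  strictMono_gaussianReal_of_isUpperSet hμt measurableSet_Ici (isUpperSet_Ici t) subset_rfl
    Ioi_subset_Ici_self

lemma strictMono_gaussianReal_Iio {μ t : ℝ} (htμ : t < μ) :
    StrictMono fun u : ℝ≥0 => (gaussianReal μ u).real (Iio t) := by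
  have hneg (u : ℝ≥0) :
      (gaussianReal μ u).real (Iio t) = (gaussianReal (-μ) u).real (Ioi (-t)) := by
    rw [← neg_neg μ, ← gaussianReal_map_neg,
      map_measureReal_apply measurable_neg measurableSet_Iio, neg_neg]
    congr 1
    ext x
    simp
  simp only [hneg]
  exact strictMono_gaussianReal_of_isUpperSet (neg_lt_neg htμ) measurableSet_Ioi
    (isUpperSet_Ioi (-t)) Ioi_subset_Ici_self subset_rfl

lemma exists_pos_le_measureReal_preimage_sdiff {Ω ι : Type*} {mΩ : MeasurableSpace Ω}
    {P : Measure Ω} [IsFiniteMeasure P] {Z : Ω → ℝ} {Y : ι → Ω → ℝ} {S : Set ℝ} {μ : ℝ}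
    {v u₀ : ℝ≥0} (hS : MeasurableSet S)
    (hmono : StrictMono fun u : ℝ≥0 => (gaussianReal μ u).real S) (hu₀ : u₀ < v)
    (hZ : P.map Z = gaussianReal μ v) (hY : ∀ i, ∃ u ≤ u₀, P.map (Y i) = gaussianReal μ u) :
    ∃ ε > 0, ∀ i, ε ≤ P.real (Z ⁻¹' S \ Y i ⁻¹' S) := by
  refine ⟨_, sub_pos.2 (hmono hu₀), fun i => ?_⟩
  obtain ⟨u, hu, hYi⟩ := hY i
  calc (gaussianReal μ v).real S - (gaussianReal μ u₀).real S
      ≤ (gaussianReal μ v).real S - (gaussianReal μ u).real S :=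
        sub_le_sub_left (hmono.monotone hu) _
    _ = P.real (Z ⁻¹' S) - P.real (Y i ⁻¹' S) := by
        rw [← hZ, ← hYi,
          map_measureReal_apply_of_aemeasurable (hasLaw_of_map_eq hZ).aemeasurable hS,
          map_measureReal_apply_of_aemeasurable (hasLaw_of_map_eq hYi).aemeasurable hS]
    _ ≤ P.real (Z ⁻¹' S \ Y i ⁻¹' S) := le_measureReal_sdiff

theorem misclassification_prob_bounded_below_of_not_tendsto_zero_general
    {Ω : Type*} [m0 : MeasurableSpace Ω] (P : Measure Ω) [IsProbabilityMeasure P]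
    (Z : Ω → ℝ) (Ztil : ℕ → Ω → ℝ) (t m₀ : ℝ) (v : NNReal) (hv : 0 < v)
    (hZ : Measure.map Z P = gaussianReal m₀ v)
    (hanti : Antitone (fun m => ∫ ω, (Z ω - Ztil m ω) ^ 2 ∂P))
    (hnot : ¬ Tendsto (fun m => ∫ ω, (Z ω - Ztil m ω) ^ 2 ∂P) atTop (nhds 0))
    (F : ℕ → MeasurableSpace Ω) (hFle : ∀ m, F m ≤ m0)
    (hcond : ∀ m, Ztil m =ᵐ[P] P[Z | F m])
    (hjointGauss : ∀ (m : ℕ) (a b : ℝ), ∃ (μ' : ℝ) (v' : NNReal),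
      Measure.map (fun ω => a * Z ω + b * Ztil m ω) P = gaussianReal μ' v')
    (ht : m₀ ≠ t) :
    ∃ ε' > (0 : ℝ), ∀ m,
      ε' ≤ (P {ω | Z ω ≥ t ∧ Ztil m ω < t}).toReal
            + (P {ω | Z ω < t ∧ Ztil m ω ≥ t}).toReal := by
  obtain ⟨L, hL, hLs⟩ := Antitone.exists_pos_le_of_not_tendsto_zero hanti
    (fun m => integral_nonneg fun ω => sq_nonneg _) hnot
  have hlaw : ∀ m, ∃ u ≤ v - L.toNNReal, P.map (Ztil m) = gaussianReal m₀ u := by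
    intro m
    obtain ⟨μ', u, hu⟩ := hjointGauss m 0 1
    simp only [zero_mul, one_mul, zero_add] at hu
    obtain ⟨rfl, hvar⟩ := gaussianReal_params_of_ae_eq_condExp (hFle m) hZ (hcond m) hu
    refine ⟨u, le_tsub_of_add_le_right ?_, hu⟩
    rw [← NNReal.coe_le_coe, NNReal.coe_add, Real.coe_toNNReal _ hL.le]
    linarith [hLs m]
  have hu₀ : v - L.toNNReal < v := tsub_lt_self hv (Real.toNNReal_pos.2 hL)
  rcases ht.lt_or_gt with hlt | hgt
  · obtain ⟨ε, hε, hle⟩ := exists_pos_le_measureReal_preimage_sdiff measurableSet_Ici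
      (strictMono_gaussianReal_Ici hlt) hu₀ hZ hlaw
    refine ⟨ε, hε, fun m => le_add_of_le_of_nonneg ((hle m).trans_eq ?_) ENNReal.toReal_nonneg⟩
    rw [measureReal_def]
    congr with ω
    simp
  · obtain ⟨ε, hε, hle⟩ := exists_pos_le_measureReal_preimage_sdiff measurableSet_Iio
      (strictMono_gaussianReal_Iio hgt) hu₀ hZ hlaw
    refine ⟨ε, hε, fun m => le_add_of_nonneg_of_le ENNReal.toReal_nonneg ((hle m).trans_eq ?_)⟩
    rw [measureReal_def]
    congr with ω
    simp

/-- Necessity direction of Proposition 2 at a fixed point: if `Z` is Gaussian with positive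
variance, the prediction errors `sₘ² = E[(Z − Z̃ₘ)²]` are nonincreasing and do not tend to
`0`, the predictors are conditional expectations `Z̃ₘ = E[Z | Fₘ]` for an increasing
filtration making each pair `(Z, Z̃ₘ)` jointly Gaussian, `E[Z] ≠ t`, and
`|t − E[Z]|/√Var(Z) ∈ [1/M, M]` for some `M > 1`, then the probability of misclassifying
the excursion event `{Z ≥ t}` stays bounded away from zero. -/
theorem misclassification_prob_bounded_below_of_not_tendsto_zero
    {Ω : Type*} [m0 : MeasurableSpace Ω] (P : Measure Ω) [IsProbabilityMeasure P]
    (Z : Ω → ℝ) (Ztil : ℕ → Ω → ℝ) (t m₀ M : ℝ) (v : NNReal) (hv : 0 < v)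
    (hZ : Measure.map Z P = gaussianReal m₀ v)
    (hint : ∀ m, Integrable (fun ω => (Z ω - Ztil m ω) ^ 2) P)
    (hanti : Antitone (fun m => ∫ ω, (Z ω - Ztil m ω) ^ 2 ∂P))
    (hnot : ¬ Tendsto (fun m => ∫ ω, (Z ω - Ztil m ω) ^ 2 ∂P) atTop (nhds 0))
    (F : ℕ → MeasurableSpace Ω) (hFmono : Monotone F) (hFle : ∀ m, F m ≤ m0)
    (hcond : ∀ m, Ztil m =ᵐ[P] P[Z | F m])
    (hjointGauss : ∀ (m : ℕ) (a b : ℝ), ∃ (μ' : ℝ) (v' : NNReal),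
      Measure.map (fun ω => a * Z ω + b * Ztil m ω) P = gaussianReal μ' v')
    (ht : m₀ ≠ t) (hM : 1 < M)
    (hratio : |t - m₀| / Real.sqrt v ∈ Set.Icc (1 / M) M) :
    ∃ ε' > (0 : ℝ), ∀ m,
      ε' ≤ (P {ω | Z ω ≥ t ∧ Ztil m ω < t}).toReal
            + (P {ω | Z ω < t ∧ Ztil m ω ≥ t}).toReal :=
  misclassification_prob_bounded_below_of_not_tendsto_zero_general (m0 := m0) P Z Ztil t m₀ v hv hZ
    hanti hnot F hFle hcond hjointGauss ht
end
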